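/- Let A be the (finite) number of available actions in a state, U the number of unsafe actions in that state with 0 < U < A, let ε ∈ (0,1] be the exploration probability, ρ ∈ [0,1] the probability of applying the prior-based bias, and C ∈ [0,1] the correctness of the prior. Define the probability of an unsafe exploratory action under ε-greedy exploration as p_greedy = ε·U/A, and the probability of an unsafe exploratory action under prior-biased exploration as p_prior = ε·U·ρ·(1−C)/(A−U) + ε·U·(1−ρ)/A. Then p_prior / p_greedy = 1 − ρ·(A·C − U)/(A − U). -/
import Mathlib


/-- Paper's main theorem: the ratio of the probability of unsafe exploratory
actions under prior-biased exploration to that under ε-greedy exploration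
equals `1 - ρ(AC - U)/(A - U)`. -/
theorem stmt_0 (A U : ℕ) (hU : 0 < U) (hUA : U < A)
    (ε ρ C : ℝ) (hε0 : 0 < ε) (hε1 : ε ≤ 1)
    (hρ0 : 0 ≤ ρ) (hρ1 : ρ ≤ 1) (hC0 : 0 ≤ C) (hC1 : C ≤ 1) :
    (ε * U * ρ * (1 - C) / ((A : ℝ) - U) + ε * U * (1 - ρ) / A) / (ε * U / A)
      = 1 - ρ * ((A : ℝ) * C - U) / ((A : ℝ) - U) := by
  have hA : (0:ℝ) < A := by exact_mod_cast hU.trans hUA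
  have hUr : (0:ℝ) < U := by exact_mod_cast hU
  have hAU : (0:ℝ) < (A:ℝ) - U := by
    have : (U:ℝ) < A := by exact_mod_cast hUA
    linarith
  field_simp
  ring
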